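/- The braid group B₃ is not residually free. -/

import Mathlib

/-!
In a free group, `a * b * a = b * a * b` forces `a = b`. By Nielsen–Schreier the subgroup `H`
generated by `a` and `b` is free; the braid relation identifies the images of `a` and `b` in the
abelianization of `H`, which is therefore cyclic. A free group with cyclic abelianization has at
most one free generator, so `H` is commutative, and then the braid relation cancels to `a = b`.
Hence every homomorphism from `B₃` to a free group identifies `σ₁` and `σ₂`, although `σ₁ ≠ σ₂`
(they map to different transpositions of `S₃`).
-/

/-- A group `G` is residually free if every nontrivial element has nontrivial image
under some homomorphism to a free group. -/
def ResiduallyFree (G : Type u) [Group G] : Prop :=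
  ∀ x : G, x ≠ 1 → ∃ (S : Type u) (f : G →* FreeGroup S), f x ≠ 1

/-- Relators for the braid group `B₃` on generators `σ₁, σ₂`. -/
def B3Rels : Set (FreeGroup (Fin 2)) :=
  { FreeGroup.of 0 * FreeGroup.of 1 * FreeGroup.of 0 *
      (FreeGroup.of 1 * FreeGroup.of 0 * FreeGroup.of 1)⁻¹ }

open Subgroup

theorem eq_of_braid_of_commute {G : Type*} [Group G] {a b : G} (hc : Commute a b)
    (h : a * b * a = b * a * b) : a = b := by
  rw [← hc.eq] at h
  exact mul_left_cancel h

theorem isCyclic_abelianization_of_braid {G : Type*} [Group G] {a b : G}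
    (hgen : closure {a, b} = ⊤) (h : a * b * a = b * a * b) : IsCyclic (Abelianization G) := by
  have hab : Abelianization.of a = Abelianization.of b :=
    eq_of_braid_of_commute (Commute.all _ _) (by simp only [← map_mul, h])
  refine ⟨Abelianization.of a, fun x => ?_⟩
  obtain ⟨g, rfl⟩ := QuotientGroup.mk_surjective x
  have hle : closure {a, b} ≤ (zpowers (Abelianization.of a)).comap Abelianization.of := by
    rw [closure_le, Set.insert_subset_iff, Set.singleton_subset_iff]
    exact ⟨mem_zpowers _, hab ▸ mem_zpowers _⟩
  exact hle (hgen ▸ mem_top g)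

namespace IsFreeGroup

theorem subsingleton_generators_of_isCyclic_abelianization {G : Type*} [Group G]
    [IsFreeGroup G] [IsCyclic (Abelianization G)] : Subsingleton (Generators G) := by
  classical
  obtain ⟨v, hv⟩ := IsCyclic.exists_generator (α := Abelianization G)
  let χ : Abelianization G →* (Generators G → Multiplicative ℤ) :=
    Abelianization.lift (lift fun s => Pi.mulSingle s (Multiplicative.ofAdd 1))
  have hχ (s t : Generators G) : χ (Abelianization.of (of s)) t =
      if t = s then Multiplicative.ofAdd 1 else 1 := by
    simp [χ, Pi.mulSingle_apply]
  refine ⟨fun s t => by_contra fun hst => ?_⟩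
  obtain ⟨n, hn⟩ := hv (Abelianization.of (of s))
  obtain ⟨m, hm⟩ := hv (Abelianization.of (of t))
  have hns := congrArg (fun x => Multiplicative.toAdd (χ x s)) hn
  have hnt := congrArg (fun x => Multiplicative.toAdd (χ x t)) hn
  have hmt := congrArg (fun x => Multiplicative.toAdd (χ x t)) hm
  simp only [map_zpow, Pi.pow_apply, toAdd_zpow, Int.zsmul_eq_mul, hχ, ↓reduceIte, toAdd_ofAdd,
    Ne.symm hst, toAdd_one, mul_eq_zero, toAdd_eq_zero] at hns hnt hmt
  rcases hnt with rfl | hvt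
  · simp at hns
  · simp [hvt] at hmt

theorem isCyclic_of_isCyclic_abelianization {G : Type*} [Group G] [IsFreeGroup G]
    [IsCyclic (Abelianization G)] : IsCyclic G := by
  have := subsingleton_generators_of_isCyclic_abelianization (G := G)
  rw [(toFreeGroup G).isCyclic]
  cases isEmpty_or_nonempty (Generators G)
  · exact isCyclic_of_subsingleton
  · have := uniqueOfSubsingleton (Classical.arbitrary (Generators G))
    infer_instance

theorem eq_of_braid {G : Type*} [Group G] [IsFreeGroup G] {a b : G}
    (h : a * b * a = b * a * b) : a = b := by
  let H := closure {a, b}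
  let a' : H := ⟨a, subset_closure (by simp)⟩
  let b' : H := ⟨b, subset_closure (by simp)⟩
  have hgen : closure {a', b'} = ⊤ := by
    rw [← closure_closure_coe_preimage (k := {a, b})]
    congr 1
    ext x
    simp [a', b', Subtype.ext_iff]
  have h' : a' * b' * a' = b' * a' * b' := Subtype.ext h
  have := isCyclic_abelianization_of_braid hgen h'
  have := isCyclic_of_isCyclic_abelianization (G := H)
  exact congrArg Subtype.val (eq_of_braid_of_commute (Std.Commutative.comm a' b') h')

end IsFreeGroup

theorem B3_braid_relation :
    (PresentedGroup.of 0 * PresentedGroup.of 1 * PresentedGroup.of 0 : PresentedGroup B3Rels) =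
      PresentedGroup.of 1 * PresentedGroup.of 0 * PresentedGroup.of 1 := by
  rw [← mul_inv_eq_one]
  exact (QuotientGroup.eq_one_iff _).2 (subset_normalClosure rfl)

theorem B3_of_zero_ne_of_one :
    (PresentedGroup.of 0 : PresentedGroup B3Rels) ≠ PresentedGroup.of 1 := by
  let σ : Fin 2 → Equiv.Perm (Fin 3) := ![Equiv.swap 0 1, Equiv.swap 1 2]
  have hσ : ∀ r ∈ B3Rels, FreeGroup.lift σ r = 1 := by
    rintro r rfl
    decide
  intro h
  have hswap := congrArg (PresentedGroup.toGroup hσ) h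
  simp only [PresentedGroup.toGroup.of] at hswap
  exact absurd hswap (by decide)

/-- The braid group `B₃` is not residually free. -/
theorem B3_not_residuallyFree : ¬ ResiduallyFree (PresentedGroup B3Rels) := by
  intro h
  obtain ⟨S, f, hf⟩ := h _ (mul_inv_eq_one.not.2 B3_of_zero_ne_of_one)
  have hbraid : f (PresentedGroup.of 0) * f (PresentedGroup.of 1) * f (PresentedGroup.of 0) =
      f (PresentedGroup.of 1) * f (PresentedGroup.of 0) * f (PresentedGroup.of 1) := by
    simpa only [map_mul] using congrArg f B3_braid_relation
  exact hf (by rw [map_mul, map_inv, IsFreeGroup.eq_of_braid hbraid, mul_inv_cancel])
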